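/- arXiv:2411.11336 — 2 statements merged into one kernel-verified Lean document; each statement's English description precedes it below -/
import Mathlib

section
/- If P is a complex polynomial of degree n having no zeros in the open unit disk, then the maximum of |P'(z)| over |z|=1 is at most (n/2) times the maximum of |P(z)| over |z|=1. -/
open Polynomial Metric Set

noncomputable def maxSphere (P : Polynomial ℂ) : ℝ :=
  sSup ((fun w => ‖P.eval w‖) '' sphere (0:ℂ) 1)

noncomputable def minSphere (P : Polynomial ℂ) : ℝ :=
  sInf ((fun w => ‖P.eval w‖) '' sphere (0:ℂ) 1)

/-!
Lax's argument. If `g` has degree at most `n` and no zeros in the open unit disk, then for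
`‖z‖ ≤ 1` every root `r` of `g` satisfies `Re (z / (z - r)) ≤ 1/2`; summing over the roots,
`S = z g'(z) / g(z)` has `Re S ≤ n/2`, whence `‖z g'(z)‖ ≤ ‖n g(z) - z g'(z)‖`.

Let `P*(z) = zⁿ · conj (P (1 / conj z))`. On the unit circle `‖P*'‖ = ‖n P - z P'‖`, so the
inequality for `g = P` reads `‖P'‖ ≤ ‖P*'‖`. For `‖μ‖ > M = max_{‖z‖=1} ‖P‖` the polynomial
`P* - μ` has no zeros in the disk by the maximum modulus principle, and the inequality for
`g = P* - μ`, with the argument of `μ` chosen suitably, gives `‖P'‖ + ‖P*'‖ ≤ n M`.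
Hence `2 ‖P'‖ ≤ n M`.
-/

open ComplexConjugate

section

variable {R : Type*} [CommRing R]

lemma coeff_X_mul_derivative (p : R[X]) (k : ℕ) : (X * derivative p).coeff k = k * p.coeff k := by
  cases k with
  | zero => simp
  | succ m => rw [coeff_X_mul, coeff_derivative]; push_cast; ring

lemma natDegree_X_mul_derivative_le (p : R[X]) : (X * derivative p).natDegree ≤ p.natDegree := by
  rw [natDegree_le_iff_coeff_eq_zero]
  intro k hk
  rw [coeff_X_mul_derivative, coeff_eq_zero_of_natDegree_lt hk, mul_zero]

lemma reflect_X_mul_derivative {N : ℕ} {p : R[X]} (hp : p.natDegree ≤ N) :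
    reflect N (X * derivative p) = C (N : R) * reflect N p - X * derivative (reflect N p) := by
  ext k
  rw [coeff_sub, coeff_C_mul, coeff_X_mul_derivative, coeff_reflect, coeff_reflect,
    coeff_X_mul_derivative]
  by_cases hk : k ≤ N
  · rw [revAt_le hk, Nat.cast_sub hk]
    ring
  · rw [revAt_eq_self_of_lt (by omega), coeff_eq_zero_of_natDegree_lt (by omega)]
    ring

end

lemma eval_inv_reflect_mul_pow {K : Type*} [Field K] {x : K} (hx : x ≠ 0) {N : ℕ} {p : K[X]}
    (hp : p.natDegree ≤ N) : eval x⁻¹ (reflect N p) * x ^ N = eval x p := by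
  have : Invertible x := invertibleOfNonzero hx
  simpa using eval₂_reflect_mul_pow (RingHom.id K) x N p hp

lemma eval_map_conj (p : ℂ[X]) (w : ℂ) :
    (p.map (starRingEnd ℂ)).eval w = conj (p.eval (conj w)) := by
  rw [eval_map, ← eval₂_hom, Complex.conj_conj]

/-- The paper's `P*(z) = zⁿ · conj (P (1 / conj z))`. -/
noncomputable def conjReflect (n : ℕ) (P : ℂ[X]) : ℂ[X] := (reflect n P).map (starRingEnd ℂ)

section conjReflect

variable {n : ℕ} {P : ℂ[X]} {z : ℂ}

lemma natDegree_conjReflect_le (hP : P.natDegree ≤ n) :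
    (conjReflect n P).natDegree ≤ n :=
  natDegree_map_le.trans (natDegree_reflect_le.trans (max_le le_rfl hP))

lemma eval_conjReflect (hP : P.natDegree ≤ n) (hz : ‖z‖ = 1) :
    (conjReflect n P).eval z = z ^ n * conj (P.eval z) := by
  have hz0 : z ≠ 0 := norm_ne_zero_iff.mp (by rw [hz]; exact one_ne_zero)
  rw [conjReflect, eval_map_conj, ← RCLike.inv_eq_conj hz, ← eval_inv_reflect_mul_pow hz0 hP,
    map_mul, map_pow, ← RCLike.inv_eq_conj hz, mul_left_comm, ← mul_pow, mul_inv_cancel₀ hz0,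
    one_pow, mul_one]

lemma conjReflect_X_mul_derivative (hP : P.natDegree ≤ n) :
    conjReflect n (X * derivative P) =
      C (n : ℂ) * conjReflect n P - X * derivative (conjReflect n P) := by
  simp only [conjReflect, reflect_X_mul_derivative hP, Polynomial.map_sub, Polynomial.map_mul,
    map_X, derivative_map, map_natCast, Polynomial.map_natCast]

lemma eval_natCast_mul_sub_X_mul_derivative_conjReflect (hP : P.natDegree ≤ n) (hz : ‖z‖ = 1) :
    n * (conjReflect n P).eval z - z * (derivative (conjReflect n P)).eval z =
      z ^ n * conj (z * (derivative P).eval z) := by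
  have h := congrArg (eval z) (conjReflect_X_mul_derivative hP)
  rw [eval_conjReflect ((natDegree_X_mul_derivative_le P).trans hP) hz] at h
  simpa using h.symm

lemma eval_X_mul_derivative_conjReflect (hP : P.natDegree ≤ n) (hz : ‖z‖ = 1) :
    z * (derivative (conjReflect n P)).eval z =
      z ^ n * conj (n * P.eval z - z * (derivative P).eval z) := by
  have h := eval_natCast_mul_sub_X_mul_derivative_conjReflect hP hz
  rw [eval_conjReflect hP hz] at h
  rw [map_sub, map_mul, map_natCast, mul_sub, ← h]
  ring

end conjReflect

lemma norm_ofReal_sub_sq (c : ℝ) (w : ℂ) : ‖(c : ℂ) - w‖ ^ 2 = ‖w‖ ^ 2 + c * (c - 2 * w.re) := by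
  rw [Complex.sq_norm, Complex.sq_norm, Complex.normSq_apply, Complex.normSq_apply]
  simp only [Complex.sub_re, Complex.sub_im, Complex.ofReal_re, Complex.ofReal_im]
  ring

lemma norm_le_norm_ofReal_sub {c : ℝ} (hc : 0 ≤ c) {w : ℂ} (hw : 2 * w.re ≤ c) :
    ‖w‖ ≤ ‖(c : ℂ) - w‖ := by
  rw [← sq_le_sq₀ (norm_nonneg _) (norm_nonneg _), norm_ofReal_sub_sq]
  nlinarith

lemma two_mul_re_div_sub_le_one {z r : ℂ} (h : ‖z‖ ≤ ‖r‖) : 2 * (z / (z - r)).re ≤ 1 := by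
  rcases eq_or_ne z r with rfl | hzr
  · simp
  have hzr' : z - r ≠ 0 := sub_ne_zero.mpr hzr
  have hle : ‖z / (z - r)‖ ≤ ‖((1 : ℝ) : ℂ) - z / (z - r)‖ := by
    rw [Complex.ofReal_one, one_sub_div hzr', sub_sub_cancel_left, norm_div, norm_div, norm_neg]
    gcongr
  have := pow_le_pow_left₀ (norm_nonneg _) hle 2
  rw [norm_ofReal_sub_sq] at this
  linarith

lemma two_mul_re_sum_div_sub_le_card {z : ℂ} {s : Multiset ℂ} (hs : ∀ r ∈ s, ‖z‖ ≤ ‖r‖) :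
    2 * (s.map fun r => z / (z - r)).sum.re ≤ Multiset.card s := by
  induction s using Multiset.induction_on with
  | empty => simp
  | cons a s ih =>
    simp only [Multiset.map_cons, Multiset.sum_cons, Complex.add_re, Multiset.card_cons]
    push_cast
    linarith [two_mul_re_div_sub_le_one (hs a (Multiset.mem_cons_self a s)),
      ih fun r hr => hs r (Multiset.mem_cons_of_mem hr)]

theorem norm_mul_eval_derivative_le {g : ℂ[X]} {n : ℕ} (hg : ∀ w : ℂ, ‖w‖ < 1 → g.eval w ≠ 0)
    (hn : g.natDegree ≤ n) {z : ℂ} (hz : ‖z‖ ≤ 1) :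
    ‖z * (derivative g).eval z‖ ≤ ‖n * g.eval z - z * (derivative g).eval z‖ := by
  by_cases h0 : g.eval z = 0
  · rw [h0, mul_zero, zero_sub, norm_neg]
  have hroots : ∀ r ∈ g.roots, ‖z‖ ≤ ‖r‖ := fun r hr =>
    hz.trans (not_lt.mp fun h => hg r h (isRoot_of_mem_roots hr))
  set S := (g.roots.map fun r => z / (z - r)).sum
  have hS : z * (derivative g).eval z = g.eval z * S := by
    rw [(IsAlgClosed.splits g).eval_derivative_eq_eval_mul_sum h0, mul_left_comm,
      ← Multiset.sum_map_mul_left]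
    simp [S, div_eq_mul_inv]
  have hre : 2 * S.re ≤ n := (two_mul_re_sum_div_sub_le_card hroots).trans <| by
    rw [IsAlgClosed.card_roots_eq_natDegree]; exact_mod_cast hn
  calc ‖z * (derivative g).eval z‖ = ‖g.eval z‖ * ‖S‖ := by rw [hS, norm_mul]
    _ ≤ ‖g.eval z‖ * ‖((n : ℝ) : ℂ) - S‖ := by
      gcongr; exact norm_le_norm_ofReal_sub n.cast_nonneg hre
    _ = ‖n * g.eval z - z * (derivative g).eval z‖ := by
      rw [hS, ← norm_mul]; push_cast; ring_nf

lemma norm_eval_le_of_forall_norm_eq_one {p : ℂ[X]} {M : ℝ}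
    (hM : ∀ z : ℂ, ‖z‖ = 1 → ‖p.eval z‖ ≤ M) {w : ℂ} (hw : ‖w‖ ≤ 1) : ‖p.eval w‖ ≤ M := by
  refine Complex.norm_le_of_forall_mem_frontier_norm_le (isBounded_ball (x := 0) (r := 1))
    p.differentiable.diffContOnCl (fun z hz => hM z ?_) ?_
  · rwa [frontier_ball 0 one_ne_zero, mem_sphere_zero_iff_norm] at hz
  · rwa [closure_ball 0 one_ne_zero, mem_closedBall_zero_iff]

lemma norm_eval_le_maxSphere (P : ℂ[X]) {z : ℂ} (hz : ‖z‖ = 1) : ‖P.eval z‖ ≤ maxSphere P :=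
  le_csSup ((isCompact_sphere 0 1).image (continuous_norm.comp P.continuous)).bddAbove
    ⟨z, mem_sphere_zero_iff_norm.mpr hz, rfl⟩

lemma maxSphere_nonneg (P : ℂ[X]) : 0 ≤ maxSphere P :=
  (norm_nonneg _).trans (norm_eval_le_maxSphere P (z := 1) norm_one)

theorem norm_natCast_mul_eval_sub_le_of_maxSphere_lt_norm {n : ℕ} {P : ℂ[X]}
    (hP : P.natDegree ≤ n) {z : ℂ} (hz : ‖z‖ = 1) {μ : ℂ} (hμ : maxSphere P < ‖μ‖) :
    ‖n * P.eval z - z * (derivative P).eval z‖ ≤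
      ‖z ^ n * conj (z * (derivative P).eval z) - n * μ‖ := by
  set g := conjReflect n P - C μ
  have hconjReflect_le : ∀ w : ℂ, ‖w‖ ≤ 1 → ‖(conjReflect n P).eval w‖ ≤ maxSphere P :=
    fun w => norm_eval_le_of_forall_norm_eq_one fun w hw => by
      rw [eval_conjReflect hP hw, norm_mul, norm_pow, hw, one_pow, one_mul, Complex.norm_conj]
      exact norm_eval_le_maxSphere P hw
  have hg : ∀ w : ℂ, ‖w‖ < 1 → g.eval w ≠ 0 := by
    intro w hw h
    rw [eval_sub, eval_C, sub_eq_zero] at h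
    exact (hconjReflect_le w hw.le).not_gt (h ▸ hμ)
  have hdeg : g.natDegree ≤ n :=
    (natDegree_sub_le _ _).trans (max_le (natDegree_conjReflect_le hP) (by simp))
  have hg' : derivative g = derivative (conjReflect n P) := by simp [g]
  have hlhs : ‖z * (derivative g).eval z‖ = ‖n * P.eval z - z * (derivative P).eval z‖ := by
    rw [hg', eval_X_mul_derivative_conjReflect hP hz, norm_mul, norm_pow, hz, one_pow, one_mul,
      Complex.norm_conj]
  have hrhs : n * g.eval z - z * (derivative g).eval z =
      z ^ n * conj (z * (derivative P).eval z) - n * μ := by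
    rw [hg', ← eval_natCast_mul_sub_X_mul_derivative_conjReflect hP hz, eval_sub, eval_C]
    ring
  simpa only [hlhs, hrhs] using norm_mul_eval_derivative_le hg hdeg hz.le

lemma norm_add_le_of_forall_le_norm_sub {w : ℂ} {b c M : ℝ} (hc : 0 < c) (hM : 0 ≤ M)
    (hwb : ‖w‖ ≤ b) (h : ∀ μ : ℂ, M < ‖μ‖ → b ≤ ‖w - c * μ‖) : ‖w‖ + b ≤ c * M := by
  set u := Complex.exp (w.arg * Complex.I)
  have hu : ‖u‖ = 1 := Complex.norm_exp_ofReal_mul_I _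
  have ht : ∀ t : ℝ, M < t → ‖w‖ + b ≤ c * t := by
    intro t ht
    have ht0 : 0 < t := hM.trans_lt ht
    have hwt : w - c * (t * u) = ((‖w‖ - c * t : ℝ) : ℂ) * u := by
      conv_lhs => rw [← Complex.norm_mul_exp_arg_mul_I w]
      push_cast; ring
    have := h (t * u) <| by
      rwa [norm_mul, hu, mul_one, Complex.norm_real, Real.norm_of_nonneg ht0.le]
    rw [hwt, norm_mul, hu, mul_one, Complex.norm_real, Real.norm_eq_abs] at this
    rcases le_or_gt (c * t) ‖w‖ with hle | hlt
    · rw [abs_of_nonneg (sub_nonneg.2 hle)] at this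
      nlinarith [mul_pos hc ht0]
    · rw [abs_of_neg (sub_neg.2 hlt)] at this
      linarith
  refine le_of_forall_gt_imp_ge_of_dense fun s hs => ?_
  simpa [mul_div_cancel₀ _ hc.ne'] using ht (s / c) (by rwa [lt_div_iff₀' hc])

theorem stmt_2 (n : ℕ) (P : Polynomial ℂ) (hP : P.natDegree = n)
    (hz : ∀ z : ℂ, ‖z‖ < 1 → P.eval z ≠ 0) :
    ∀ z : ℂ, ‖z‖ = 1 →
      ‖(derivative P).eval z‖ ≤ (n / 2 : ℝ) * maxSphere P := by
  intro z hz1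
  rcases Nat.eq_zero_or_pos n with rfl | hn
  · rw [eq_C_of_natDegree_eq_zero hP]
    simp
  have hw : ‖z ^ n * conj (z * (derivative P).eval z)‖ = ‖(derivative P).eval z‖ := by
    rw [norm_mul, norm_pow, hz1, one_pow, one_mul, Complex.norm_conj, norm_mul, hz1, one_mul]
  have hlax := norm_mul_eval_derivative_le hz hP.le hz1.le
  rw [norm_mul, hz1, one_mul] at hlax
  have hsum := norm_add_le_of_forall_le_norm_sub (Nat.cast_pos.mpr hn) (maxSphere_nonneg P)
    (hw.trans_le hlax) fun μ hμ => by
      push_cast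
      exact norm_natCast_mul_eval_sub_le_of_maxSphere_lt_norm hP.le hz1 hμ
  rw [hw] at hsum
  linarith
end

section
/- Let p be a polynomial of degree n. Then for every β ∈ ℂ with |β| ≤ 1, every R ≥ 1, every a with |a| ≤ 1, and every z with |z| ≥ 1: |(1+az)[Rp'(Rz) − βp'(z)] − n a [p(Rz) − βp(z)]| ≤ n |R^n − β| |z|^{n−1} max_{|w|=1}|p(w)|. -/
open Polynomial Metric Set

/-!
Write `B f (z) = (1 + a z) f'(z) - n a f(z)` (up to the factor `-a`, the polar derivative of `f`
with respect to `-1/a`) and `q(z) = p(Rz) - β p(z)`, so that the left-hand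
side is `|B q (z)|`, while `B` sends `M zⁿ` to `n (Rⁿ - β) M zⁿ⁻¹`, whose modulus is the right-hand
side. If the inequality failed at `z`, then for a suitable `c` with `|c| > M` the polynomial
`G = p - c zⁿ` would satisfy `B (G(R·) - β G) (z) = 0`. But `|p(w)| ≤ M |w|ⁿ` for `|w| ≥ 1`, so
`G` has degree `n` and all its zeros in the open unit disc; comparing `|G(Rw)|` and `|G(w)|`
factor by factor, so does `H = G(R·) - β G`. Finally `B H (z) = H(z) ∑ (1 + a r) / (z - r)` over
the roots `r` of `H`, and all these terms lie in the open half-plane `Re ((z + ā) w) > 0`.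
-/

open ComplexConjugate

section UnitCircleBound

variable {f : ℂ[X]} {n : ℕ} {M : ℝ}

theorem eval_reflect_inv_mul_pow (hf : f.natDegree ≤ n) {x : ℂ} (hx : x ≠ 0) :
    (reflect n f).eval x⁻¹ * x ^ n = f.eval x := by
  have : Invertible x := invertibleOfNonzero hx
  simpa [invOf_eq_inv] using eval₂_reflect_mul_pow (RingHom.id ℂ) x n f hf

variable (hf : f.natDegree ≤ n) (hM : ∀ w : ℂ, ‖w‖ = 1 → ‖f.eval w‖ ≤ M)
include hf hM

theorem norm_eval_reflect_le {u : ℂ} (hu : ‖u‖ ≤ 1) : ‖(reflect n f).eval u‖ ≤ M := by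
  refine Complex.norm_le_of_forall_mem_frontier_norm_le isBounded_ball
    (reflect n f).differentiable.diffContOnCl (fun w hw ↦ ?_)
    (by rwa [closure_ball _ one_ne_zero, mem_closedBall_zero_iff])
  rw [frontier_ball _ one_ne_zero, mem_sphere_zero_iff_norm] at hw
  have hw0 : w ≠ 0 := norm_ne_zero_iff.mp (by rw [hw]; exact one_ne_zero)
  have hwinv : ‖w⁻¹‖ = 1 := by rw [norm_inv, hw, inv_one]
  have hnorm := congrArg norm (eval_reflect_inv_mul_pow hf (inv_ne_zero hw0))
  rw [inv_inv, norm_mul, norm_pow, hwinv, one_pow, mul_one] at hnorm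
  exact hnorm ▸ hM w⁻¹ hwinv

theorem norm_eval_le_mul_norm_pow {z : ℂ} (hz : 1 ≤ ‖z‖) : ‖f.eval z‖ ≤ M * ‖z‖ ^ n := by
  have hz0 : z ≠ 0 := norm_pos_iff.mp (one_pos.trans_le hz)
  rw [← eval_reflect_inv_mul_pow hf hz0, norm_mul, norm_pow]
  gcongr
  exact norm_eval_reflect_le hf hM (by rw [norm_inv]; exact inv_le_one_of_one_le₀ hz)

theorem norm_coeff_le : ‖f.coeff n‖ ≤ M := by
  simpa [← coeff_zero_eq_eval_zero, coeff_reflect] using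
    norm_eval_reflect_le hf hM (u := 0) (by simp)

theorem natDegree_sub_C_mul_X_pow {c : ℂ} (hc : M < ‖c‖) : (f - C c * X ^ n).natDegree = n := by
  refine natDegree_eq_of_le_of_coeff_ne_zero ?_ ?_
  · exact (natDegree_sub_le _ _).trans (max_le hf (natDegree_C_mul_X_pow_le c n))
  · rw [coeff_sub, coeff_C_mul_X_pow, if_pos rfl, sub_ne_zero]
    exact fun h ↦ (norm_coeff_le hf hM).not_gt (h ▸ hc)

theorem eval_sub_C_mul_X_pow_ne_zero {c : ℂ} (hc : M < ‖c‖) :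
    ∀ z : ℂ, 1 ≤ ‖z‖ → (f - C c * X ^ n).eval z ≠ 0 := by
  intro z hz
  rw [eval_sub, eval_mul, eval_C, eval_pow, eval_X, sub_ne_zero]
  intro h
  have hpow : 0 < ‖z‖ ^ n := pow_pos (one_pos.trans_le hz) n
  have := norm_eval_le_mul_norm_pow hf hM hz
  rw [h, norm_mul, norm_pow] at this
  exact (mul_lt_mul_of_pos_right hc hpow).not_ge this

end UnitCircleBound

theorem natDegree_comp_C_mul_X_sub {G : ℂ[X]} {R β : ℂ} (hR : R ≠ 0)
    (hRβ : R ^ G.natDegree ≠ β) : (G.comp (C R * X) - C β * G).natDegree = G.natDegree := by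
  rcases eq_or_ne G 0 with rfl | hG0
  · simp
  have hRX : (C R * X).natDegree = 1 := natDegree_C_mul_X R hR
  refine natDegree_eq_of_le_of_coeff_ne_zero ?_ ?_
  · refine (natDegree_sub_le _ _).trans (max_le ?_ (natDegree_C_mul_le _ _))
    rw [natDegree_comp, hRX, mul_one]
  · have hcomp := coeff_comp_degree_mul_degree (p := G) (hRX ▸ one_ne_zero)
    rw [hRX, mul_one, leadingCoeff_C_mul_X] at hcomp
    rw [coeff_sub, hcomp, coeff_C_mul, ← leadingCoeff, mul_comm β, ← mul_sub]
    exact mul_ne_zero (leadingCoeff_ne_zero.mpr hG0) (sub_ne_zero.mpr hRβ)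

theorem norm_sub_lt_norm_mul_sub {R : ℝ} (hR : 1 < R) {z r : ℂ} (hz : 1 ≤ ‖z‖) (hr : ‖r‖ < 1) :
    ‖z - r‖ < ‖R * z - r‖ := by
  have hre : (z * conj r).re ≤ ‖z‖ * ‖r‖ := by
    simpa using Complex.re_le_norm (z * conj r)
  have hgap : 2 * (‖z‖ * ‖r‖) < (R + 1) * ‖z‖ ^ 2 := by
    nlinarith [mul_lt_mul_of_pos_left hr (one_pos.trans_le hz)]
  rw [← sq_lt_sq₀ (norm_nonneg _) (norm_nonneg _), Complex.sq_norm, Complex.sq_norm]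
  rw [Complex.sq_norm] at hgap
  simp only [Complex.normSq_apply, Complex.sub_re, Complex.sub_im, Complex.mul_re,
    Complex.mul_im, Complex.ofReal_re, Complex.ofReal_im, Complex.conj_re, Complex.conj_im]
    at hre hgap ⊢
  nlinarith [mul_le_mul_of_nonneg_left hre (sub_pos.mpr hR).le,
    mul_lt_mul_of_pos_left hgap (sub_pos.mpr hR)]

section ZerosOutsideDisk

variable {G : ℂ[X]} (hG : ∀ z : ℂ, 1 ≤ ‖z‖ → G.eval z ≠ 0)
include hG

theorem norm_lt_one_of_mem_roots {r : ℂ} (hr : r ∈ G.roots) : ‖r‖ < 1 :=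
  not_le.mp fun h ↦ hG r h (isRoot_of_mem_roots hr)

theorem norm_eval_lt_norm_eval_mul (hdeg : 0 < G.natDegree) {R : ℝ} (hR : 1 < R) {z : ℂ}
    (hz : 1 ≤ ‖z‖) : ‖G.eval z‖ < ‖G.eval (R * z)‖ := by
  have hG0 : G ≠ 0 := ne_zero_of_natDegree_gt hdeg
  have norm_prod (s : Multiset ℂ) : ‖s.prod‖ = (s.map (‖·‖)).prod :=
    map_multiset_prod (normHom : ℂ →*₀ ℝ) s
  simp only [(IsAlgClosed.splits G).eval_eq_prod_roots, norm_mul, norm_prod, Multiset.map_map]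
  refine mul_lt_mul_of_pos_left (Multiset.prod_map_lt_prod_map ?_ _ _ (fun r hr ↦ ?_)
    (fun r hr ↦ ?_)) (norm_pos_iff.mpr (leadingCoeff_ne_zero.mpr hG0))
  · exact (IsAlgClosed.splits G).roots_ne_zero hdeg.ne'
  · exact norm_pos_iff.mpr (sub_ne_zero.mpr fun h ↦ (h ▸ norm_lt_one_of_mem_roots hG hr).not_ge hz)
  · exact norm_sub_lt_norm_mul_sub hR hz (norm_lt_one_of_mem_roots hG hr)

theorem eval_comp_C_mul_X_sub_ne_zero (hdeg : 0 < G.natDegree) {R : ℝ} (hR : 1 ≤ R) {β : ℂ}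
    (hβ : ‖β‖ ≤ 1) (hRβ : (R : ℂ) ^ G.natDegree ≠ β) :
    ∀ z : ℂ, 1 ≤ ‖z‖ → (G.comp (C (R : ℂ) * X) - C β * G).eval z ≠ 0 := by
  intro z hz
  simp only [eval_sub, eval_comp, eval_mul, eval_C, eval_X, sub_ne_zero]
  intro h
  rcases hR.eq_or_lt with rfl | hR1
  · have : (1 - β) * G.eval z = 0 := by linear_combination (by simpa using h : G.eval z = _)
    rcases mul_eq_zero.mp this with hβ1 | hGz
    · exact hRβ (by rw [Complex.ofReal_one, one_pow]; linear_combination hβ1)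
    · exact hG z hz hGz
  · have := norm_eval_lt_norm_eval_mul hG hdeg hR1 hz
    rw [h, norm_mul] at this
    exact (mul_le_of_le_one_left (norm_nonneg _) hβ).not_gt this

end ZerosOutsideDisk

theorem re_multiset_sum_pos {s : Multiset ℂ} (hs : s ≠ 0) (h : ∀ w ∈ s, 0 < w.re) :
    0 < s.sum.re := by
  rw [show s.sum.re = (s.map Complex.re).sum from map_multiset_sum Complex.reAddGroupHom s]
  simpa using Multiset.sum_lt_sum_of_nonempty (f := fun _ ↦ (0 : ℝ)) hs h

theorem two_mul_re_mul_mul_conj_sub (a r z : ℂ) :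
    2 * ((z + conj a) * (1 + a * r) * conj (z - r)).re =
      (1 - ‖a‖ ^ 2) * ‖z - r‖ ^ 2 + (1 - ‖r‖ ^ 2) * ‖1 + a * z‖ ^ 2 +
        (‖z‖ ^ 2 - 1) * ‖1 + a * r‖ ^ 2 := by
  simp only [Complex.sq_norm, Complex.normSq_apply, Complex.mul_re, Complex.mul_im,
    Complex.add_re, Complex.add_im, Complex.sub_re, Complex.sub_im, Complex.conj_re,
    Complex.conj_im, Complex.one_re, Complex.one_im]
  ring

theorem re_mul_one_add_mul_div_sub_pos {a r z : ℂ} (ha : ‖a‖ ≤ 1) (hr : ‖r‖ < 1)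
    (hz : 1 ≤ ‖z‖) (haz : 1 + a * z ≠ 0) : 0 < ((z + conj a) * ((1 + a * r) / (z - r))).re := by
  have hzr : z - r ≠ 0 := sub_ne_zero.mpr fun h ↦ (h ▸ hr).not_ge hz
  have hnum : 0 < ((z + conj a) * (1 + a * r) * conj (z - r)).re := by
    have ha2 : 0 ≤ (1 - ‖a‖ ^ 2) * ‖z - r‖ ^ 2 :=
      mul_nonneg (sub_nonneg.mpr (pow_le_one₀ (norm_nonneg a) ha)) (sq_nonneg _)
    have hr2 : 0 < (1 - ‖r‖ ^ 2) * ‖1 + a * z‖ ^ 2 :=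
      mul_pos (sub_pos.mpr (pow_lt_one₀ (norm_nonneg r) hr two_ne_zero))
        (pow_pos (norm_pos_iff.mpr haz) 2)
    have hz2 : 0 ≤ (‖z‖ ^ 2 - 1) * ‖1 + a * r‖ ^ 2 :=
      mul_nonneg (sub_nonneg.mpr (one_le_pow₀ hz)) (sq_nonneg _)
    linarith [two_mul_re_mul_mul_conj_sub a r z]
  have hdiv : (z + conj a) * ((1 + a * r) / (z - r)) =
      (z + conj a) * (1 + a * r) * conj (z - r) / (Complex.normSq (z - r) : ℂ) := by
    rw [← Complex.mul_conj, mul_div_mul_right _ _ ((_root_.map_ne_zero conj).mpr hzr),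
      mul_div_assoc]
  rw [hdiv, Complex.div_ofReal_re]
  exact div_pos hnum (Complex.normSq_pos.mpr hzr)

theorem eval_one_add_mul_derivative_sub_ne_zero {H : ℂ[X]}
    (hH : ∀ z : ℂ, 1 ≤ ‖z‖ → H.eval z ≠ 0) (hdeg : 0 < H.natDegree) {a z : ℂ} (ha : ‖a‖ ≤ 1)
    (hz : 1 ≤ ‖z‖) :
    (1 + a * z) * H.derivative.eval z - H.natDegree * a * H.eval z ≠ 0 := by
  have hHz := hH z hz
  by_cases haz : 1 + a * z = 0
  · have ha0 : a ≠ 0 := by rintro rfl; simp at haz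
    simp [haz, ha0, hHz, hdeg.ne']
  have hsplit := IsAlgClosed.splits H
  have hzr {r : ℂ} (hr : r ∈ H.roots) : z - r ≠ 0 :=
    sub_ne_zero.mpr fun h ↦ (h ▸ norm_lt_one_of_mem_roots hH hr).not_ge hz
  have hlog : H.derivative.eval z = H.eval z * (H.roots.map fun r ↦ 1 / (z - r)).sum := by
    rw [← hsplit.eval_derivative_div_eval_of_ne_zero hHz, mul_div_cancel₀ _ hHz]
  have hterm : H.roots.map (fun r ↦ (1 + a * r) / (z - r)) =
      H.roots.map (fun r ↦ (1 + a * z) * (1 / (z - r)) - a) :=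
    Multiset.map_congr rfl fun r hr ↦ by field_simp [hzr hr]; ring
  have hsum : (1 + a * z) * H.derivative.eval z - H.natDegree * a * H.eval z =
      H.eval z * (H.roots.map fun r ↦ (1 + a * r) / (z - r)).sum := by
    rw [hterm, Multiset.sum_map_sub, Multiset.sum_map_mul_left, Multiset.map_const',
      Multiset.sum_replicate, nsmul_eq_mul, hlog, hsplit.natDegree_eq_card_roots]
    ring
  rw [hsum]
  refine mul_ne_zero hHz fun h0 ↦ ?_
  have hpos := re_multiset_sum_pos
    (s := H.roots.map fun r ↦ (z + conj a) * ((1 + a * r) / (z - r)))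
    (by simpa using hsplit.roots_ne_zero hdeg.ne') (by
      simp only [Multiset.mem_map]
      rintro _ ⟨r, hr, rfl⟩
      exact re_mul_one_add_mul_div_sub_pos ha (norm_lt_one_of_mem_roots hH hr) hz haz)
  rw [Multiset.sum_map_mul_left, h0, mul_zero, Complex.zero_re] at hpos
  exact hpos.false

theorem eval_polar_dilation_sub_C_mul_X_pow (p : ℂ[X]) (c β a z : ℂ) (R : ℝ) (m : ℕ) :
    (1 + a * z) * ((p - C c * X ^ (m + 1)).comp (C (R : ℂ) * X) -
          C β * (p - C c * X ^ (m + 1))).derivative.eval z -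
        (m + 1 : ℕ) * a * ((p - C c * X ^ (m + 1)).comp (C (R : ℂ) * X) -
          C β * (p - C c * X ^ (m + 1))).eval z =
      (1 + a * z) * (R * p.derivative.eval (R * z) - β * p.derivative.eval z) -
          (m + 1 : ℕ) * a * (p.eval (R * z) - β * p.eval z) -
        c * ((m + 1 : ℕ) * ((R : ℂ) ^ (m + 1) - β) * z ^ m) := by
  simp only [derivative_sub, derivative_comp, derivative_mul, derivative_C, derivative_X_pow,
    derivative_X, eval_sub, eval_mul, eval_comp, eval_C, eval_X, eval_pow, eval_add, eval_one,
    eval_zero, Nat.add_sub_cancel]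
  ring

theorem norm_polar_dilation_sub_le {n : ℕ} {p : ℂ[X]} (hp : p.natDegree ≤ n) {M : ℝ}
    (hM : ∀ w : ℂ, ‖w‖ = 1 → ‖p.eval w‖ ≤ M) {β a : ℂ} (hβ : ‖β‖ ≤ 1) (ha : ‖a‖ ≤ 1) {R : ℝ}
    (hR : 1 ≤ R) {z : ℂ} (hz : 1 ≤ ‖z‖) :
    ‖(1 + a * z) * (R * p.derivative.eval (R * z) - β * p.derivative.eval z) -
        n * a * (p.eval (R * z) - β * p.eval z)‖ ≤
      n * ‖(R : ℂ) ^ n - β‖ * ‖z‖ ^ (n - 1) * M := by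
  rcases n with _ | m
  · simp [derivative_of_natDegree_zero (Nat.le_zero.mp hp)]
  by_cases hRβ : (R : ℂ) ^ (m + 1) = β
  · have hRpow : R ^ (m + 1) ≤ 1 := by
      simpa [← hRβ, abs_of_nonneg (zero_le_one.trans hR)] using hβ
    obtain rfl : R = 1 := le_antisymm ((le_self_pow₀ hR m.succ_ne_zero).trans hRpow) hR
    subst hRβ
    simp
  rw [Nat.add_sub_cancel]
  by_contra! hlt
  set L := (1 + a * z) * (R * p.derivative.eval (R * z) - β * p.derivative.eval z) -
    (m + 1 : ℕ) * a * (p.eval (R * z) - β * p.eval z)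
  set K : ℂ := (m + 1 : ℕ) * ((R : ℂ) ^ (m + 1) - β) * z ^ m with hK
  have hK0 : K ≠ 0 := mul_ne_zero (mul_ne_zero (Nat.cast_ne_zero.mpr m.succ_ne_zero)
    (sub_ne_zero.mpr hRβ)) (pow_ne_zero _ (norm_pos_iff.mp (one_pos.trans_le hz)))
  have hcM : M < ‖L / K‖ := by
    rw [norm_div, lt_div_iff₀ (norm_pos_iff.mpr hK0), hK, norm_mul, norm_mul, norm_pow,
      Complex.norm_natCast]
    linarith
  have hGdeg := natDegree_sub_C_mul_X_pow hp hM hcM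
  rw [← hGdeg] at hRβ
  have hHdeg := natDegree_comp_C_mul_X_sub (Complex.ofReal_ne_zero.mpr (by linarith)) hRβ
  apply eval_one_add_mul_derivative_sub_ne_zero
    (eval_comp_C_mul_X_sub_ne_zero (eval_sub_C_mul_X_pow_ne_zero hp hM hcM) (by omega) hR hβ hRβ)
    (by omega) ha hz
  rw [hHdeg, hGdeg, eval_polar_dilation_sub_C_mul_X_pow, div_mul_cancel₀ _ hK0, sub_self]

theorem norm_eval_le_maxSphere_s14 (p : ℂ[X]) {w : ℂ} (hw : ‖w‖ = 1) : ‖p.eval w‖ ≤ maxSphere p :=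
  le_csSup ((isCompact_sphere 0 1).image (continuous_norm.comp p.continuous)).bddAbove
    ⟨w, mem_sphere_zero_iff_norm.mpr hw, rfl⟩

theorem stmt_14 (n : ℕ) (p : Polynomial ℂ) (hp : p.natDegree = n)
    (β a : ℂ) (hβ : ‖β‖ ≤ 1) (ha : ‖a‖ ≤ 1)
    (R : ℝ) (hR : 1 ≤ R) :
    ∀ z : ℂ, 1 ≤ ‖z‖ →
      ‖(1 + a * z) * (R * (derivative p).eval (R * z) - β * (derivative p).eval z) -
          n * a * (p.eval (R * z) - β * p.eval z)‖ ≤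
        n * ‖(R : ℂ) ^ n - β‖ * (‖z‖) ^ (n - 1) * maxSphere p :=
  fun _ hz ↦ norm_polar_dilation_sub_le hp.le (fun _ ↦ norm_eval_le_maxSphere_s14 p) hβ ha hR hz
end
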